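/- Let P be a binary path of length n starting with a downstep and let (i,j) be a cell of its shifted diagram F(P). The corresponding lattice point (n+i−j, n−i−j) is a valley of P of minimal valley height (a low valley) if and only if i + j − 1 = δ(P) = n − 1 − lv(P). -/

import Mathlib

open Finset

/-- The `x`-th step (1-indexed) of a binary path `P` of length `n`;
`true` denotes an upstep `u`, `false` a downstep `d`. -/
def stp (n : ℕ) (P : Fin n → Bool) (x : ℕ) : Bool :=
  if h : 1 ≤ x ∧ x ≤ n then P ⟨x - 1, by omega⟩ else true

/-- The height of the `x`-th lattice point of the path (the partial sum of `±1`'s). -/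
def ht (n : ℕ) (P : Fin n → Bool) (x : ℕ) : ℤ :=
  ∑ j ∈ Finset.Icc 1 x, (if stp n P j then (1 : ℤ) else -1)

/-- The order on binary paths: `P ≤ Q` iff every height of `P` is at most that of `Q`. -/
def pLE (n : ℕ) (P Q : Fin n → Bool) : Prop := ∀ x ≤ n, ht n P x ≤ ht n Q x

def pLT (n : ℕ) (P Q : Fin n → Bool) : Prop := pLE n P Q ∧ ¬ pLE n Q P

/-- `Q` covers `P` in the lattice of binary paths. -/
def covers (n : ℕ) (P Q : Fin n → Bool) : Prop :=
  pLT n P Q ∧ ∀ R, pLT n P R → ¬ pLT n R Q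

/-- The `x`-th point of `P` is a valley: last point of a maximal run of downsteps. -/
def valley (n : ℕ) (P : Fin n → Bool) (x : ℕ) : Prop :=
  1 ≤ x ∧ x ≤ n ∧ stp n P x = false ∧ (x = n ∨ stp n P (x + 1) = true)

/-- The maximum path `1_n = u^n`. -/
def pTop (n : ℕ) : Fin n → Bool := fun _ => true

/-- The minimum path `0_n = d^n`. -/
def pBot (n : ℕ) : Fin n → Bool := fun _ => false

/-- The set of positions of downsteps of `P`. -/
def dsteps (n : ℕ) (P : Fin n → Bool) : Finset (Fin n) :=
  Finset.univ.filter fun j => P j = false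

/-- `m(P) = |P|_d`, the number of downsteps of `P`. -/
def nd (n : ℕ) (P : Fin n → Bool) : ℕ := (dsteps n P).card

/-- The 0-indexed position of the `(i+1)`-st downstep of `P`. -/
def dpos (n : ℕ) (P : Fin n → Bool) (i : Fin (nd n P)) : ℕ :=
  (((dsteps n P).orderIsoOfFin rfl i : {x // x ∈ dsteps n P}) : Fin n)

/-- The part `λ_{i+1} = n − (i+1) − k_{i+1} + 1` of the strict partition `λ(P)`;
since `k_{i+1} = dpos i − i`, this equals `n − dpos i`. -/
def lam (n : ℕ) (P : Fin n → Bool) (i : Fin (nd n P)) : ℕ := n - dpos n P i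

/-- The shifted diagram `F(P)` of shape `λ(P)`, as the set of (1-indexed) cells
`(i, j)` with `i ∈ [m]`, `i ≤ j ≤ λ_i + i − 1`. -/
def F (n : ℕ) (P : Fin n → Bool) : Set (ℕ × ℕ) :=
  {c | ∃ i : Fin (nd n P),
    c.1 = (i : ℕ) + 1 ∧ (i : ℕ) + 1 ≤ c.2 ∧ c.2 ≤ lam n P i + (i : ℕ)}

/-- `lv P`: the minimal height among all valleys of `P`. -/
noncomputable def lv (n : ℕ) (P : Fin n → Bool) : ℤ :=
  sInf {h : ℤ | ∃ x, valley n P x ∧ ht n P x = h}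

open Finset

/-!
Every valley height is a height of `P`, and since `P` starts with a downstep a global minimum of
the heights over `[1, n]` is itself a valley; hence `lv P` is the minimum height of `P`. For a cell
`(i, j)` of `F(P)` the point `x = n + i - j` lies weakly after the `i`-th downstep, so at least `i`
of the first `x` steps are downsteps and `ht x ≤ x - 2i = n - i - j`. Thus
`lv P ≤ ht x ≤ n - i - j`, and `i + j - 1 = n - 1 - lv P` forces equality throughout, which makes
`x` a point of minimal height, hence a low valley.
-/

section Heights

variable (n : ℕ) (P : Fin n → Bool)

lemma ht_succ (x : ℕ) :
    ht n P (x + 1) = ht n P x + (if stp n P (x + 1) then (1 : ℤ) else -1) := by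
  rw [ht, ht, ← Finset.sum_Icc_succ_top (by omega)]

lemma ht_eq_sub_two_mul_card (x : ℕ) :
    ht n P x = (x : ℤ) - 2 * #{j ∈ Icc 1 x | stp n P j = false} := by
  induction x with
  | zero => simp [ht]
  | succ x ih =>
    have hIcc : Icc 1 (x + 1) = insert (x + 1) (Icc 1 x) := by
      ext y
      simp only [mem_Icc, mem_insert]
      omega
    rw [ht_succ, ih, hIcc, filter_insert]
    by_cases hs : stp n P (x + 1) = false
    · rw [if_pos hs, if_neg (by simp [hs]), card_insert_of_notMem (by simp)]
      push_cast
      ring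
    · rw [if_neg hs, if_pos (by simpa using hs)]
      push_cast
      ring

lemma valley_of_forall_ht_le (hd : stp n P 1 = false) {x : ℕ} (hx : x ∈ Icc 1 n)
    (hmin : ∀ y ∈ Icc 1 n, ht n P x ≤ ht n P y) : valley n P x := by
  rw [mem_Icc] at hx
  refine ⟨hx.1, hx.2, ?_, ?_⟩
  · by_contra hup
    rw [Bool.not_eq_false] at hup
    obtain rfl | hx2 := eq_or_lt_of_le hx.1
    · rw [hd] at hup
      exact Bool.false_ne_true hup
    · have hstep := ht_succ n P (x - 1)
      rw [Nat.sub_add_cancel hx.1, hup, if_pos rfl] at hstep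
      have := hmin (x - 1) (mem_Icc.2 ⟨by omega, by omega⟩)
      omega
  · by_contra! hdown
    have hstep := ht_succ n P x
    simp only [ne_eq, Bool.not_eq_true] at hdown
    rw [hdown.2, if_neg Bool.false_ne_true] at hstep
    have := hmin (x + 1) (mem_Icc.2 ⟨by omega, by omega⟩)
    omega

lemma lv_le_ht (hd : stp n P 1 = false) {y : ℕ} (hy : y ∈ Icc 1 n) : lv n P ≤ ht n P y := by
  obtain ⟨x, hx, hmin⟩ := (Icc 1 n).exists_min_image (ht n P) ⟨y, hy⟩
  have hbdd : BddBelow {h : ℤ | ∃ x, valley n P x ∧ ht n P x = h} := by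
    refine ⟨ht n P x, ?_⟩
    rintro _ ⟨z, hz, rfl⟩
    exact hmin z (mem_Icc.2 ⟨hz.1, hz.2.1⟩)
  calc lv n P ≤ ht n P x := csInf_le hbdd ⟨x, valley_of_forall_ht_le n P hd hx hmin, rfl⟩
    _ ≤ ht n P y := hmin y hy

end Heights

section Downsteps

variable {n : ℕ} {P : Fin n → Bool}

lemma dpos_eq_orderEmbOfFin (i : Fin (nd n P)) :
    dpos n P i = ((dsteps n P).orderEmbOfFin rfl i : ℕ) :=
  rfl

lemma dpos_lt (i : Fin (nd n P)) : dpos n P i < n := by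
  rw [dpos_eq_orderEmbOfFin]
  exact Fin.isLt _

lemma dpos_strictMono : StrictMono (dpos n P) := fun _ _ hij => by
  simpa only [dpos_eq_orderEmbOfFin, Fin.val_fin_lt] using
    ((dsteps n P).orderEmbOfFin rfl).strictMono hij

lemma stp_dpos_succ (i : Fin (nd n P)) : stp n P (dpos n P i + 1) = false := by
  have hmem := (dsteps n P).orderEmbOfFin_mem rfl i
  simp only [dsteps, mem_filter, mem_univ, true_and] at hmem
  rw [stp, dif_pos ⟨by omega, dpos_lt i⟩]
  convert hmem using 2
  exact Fin.ext (dpos_eq_orderEmbOfFin i)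

lemma le_card_filter_stp_of_dpos_lt (i : Fin (nd n P)) {x : ℕ} (hx : dpos n P i < x) :
    (i : ℕ) + 1 ≤ #{j ∈ Icc 1 x | stp n P j = false} := by
  rw [← Fin.card_Iic]
  refine card_le_card_of_injOn (fun k => dpos n P k + 1) (fun k hk => ?_)
    (fun a _ b _ hab => dpos_strictMono.injective (Nat.succ_injective hab))
  have hki := dpos_strictMono.monotone (mem_Iic.1 hk)
  simp only [coe_filter, Set.mem_ofPred_eq, mem_Icc]
  exact ⟨⟨by omega, by omega⟩, stp_dpos_succ k⟩

end Downsteps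

theorem stmt12_general (n : ℕ) (P : Fin n → Bool) (hd : stp n P 1 = false)
    (c : ℕ × ℕ) (hc : c ∈ F n P) :
    (ht n P (n + c.1 - c.2) = (n : ℤ) - c.1 - c.2 ∧
      valley n P (n + c.1 - c.2) ∧ ht n P (n + c.1 - c.2) = lv n P) ↔
    (c.1 : ℤ) + c.2 - 1 = (n : ℤ) - 1 - lv n P := by
  obtain ⟨i, hrow, hcol_lo, hcol_hi⟩ := hc
  rw [lam] at hcol_hi
  have hi := dpos_lt i
  set x := n + c.1 - c.2
  have hx : x ∈ Icc 1 n := mem_Icc.2 ⟨by omega, by omega⟩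
  have hht : ht n P x ≤ (n : ℤ) - c.1 - c.2 := by
    have hcard := le_card_filter_stp_of_dpos_lt i (x := x) (by omega)
    rw [ht_eq_sub_two_mul_card]
    omega
  constructor
  · rintro ⟨hxc, -, hxlv⟩
    linarith
  · intro hcell
    have hxlv : ht n P x = lv n P := le_antisymm (by linarith) (lv_le_ht n P hd hx)
    exact ⟨by linarith, valley_of_forall_ht_le n P hd hx fun y hy => hxlv ▸ lv_le_ht n P hd hy,
      hxlv⟩

/-- For a cell `(i,j)` of `F(P)`, the corresponding lattice point `(n+i−j, n−i−j)`
is a low valley of `P` iff `i + j − 1 = δ(P) = n − 1 − lv(P)`. -/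
theorem stmt12 (n : ℕ) (P : Fin n → Bool) (hn : 0 < n) (hd : stp n P 1 = false)
    (hP : P ≠ pTop n) (c : ℕ × ℕ) (hc : c ∈ F n P) :
    (ht n P (n + c.1 - c.2) = (n : ℤ) - c.1 - c.2 ∧
      valley n P (n + c.1 - c.2) ∧ ht n P (n + c.1 - c.2) = lv n P) ↔
    (c.1 : ℤ) + c.2 - 1 = (n : ℤ) - 1 - lv n P :=
  stmt12_general n P hd c hc
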